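/- arXiv:2509.24249 — 8 statements merged into one kernel-verified Lean document; each statement's English description precedes it below -/
import Mathlib

section
/- Under the quadratic growth of the lower-level objective and boundedness of its gradient by M, for any y in the ambient set Y with dist(y, 𝒴(x)) ≤ ε, we have G(x,y) − v(x) ≥ (μ/4)‖y − y*(x)‖² − Mε − (μ/2)ε², where v(x) = min over 𝒴(x) of G(x,·) and y*(x) is its unique minimizer. -/
/-! Let `z` be a nearest point of `S` to `y`, so `‖y - z‖ ≤ ε`. The gradient bound makes `G`
`M`-Lipschitz on `Y`, so `G y ≥ G z - M ε`; quadratic growth gives `G z - v ≥ (μ/2)‖z - y*‖²`;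
and `‖y - y*‖² ≤ 2‖y - z‖² + 2‖z - y*‖²` trades `‖z - y*‖` for `‖y - y*‖` at the cost
`(μ/2)ε²`. -/

lemma norm_sub_sq_le_two_mul_add {E : Type*} [SeminormedAddCommGroup E] (a b c : E) :
    ‖a - c‖ ^ 2 ≤ 2 * (‖a - b‖ ^ 2 + ‖b - c‖ ^ 2) :=
  calc ‖a - c‖ ^ 2 ≤ (‖a - b‖ + ‖b - c‖) ^ 2 := by
        gcongr; exact norm_sub_le_norm_sub_add_norm_sub a b c
    _ ≤ 2 * (‖a - b‖ ^ 2 + ‖b - c‖ ^ 2) := add_sq_le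

lemma Convex.sub_le_of_norm_gradient_le {F : Type*} [NormedAddCommGroup F]
    [InnerProductSpace ℝ F] [CompleteSpace F] {Y : Set F} {G : F → ℝ} {M : ℝ}
    (hY : Convex ℝ Y) (hG : ∀ x ∈ Y, DifferentiableAt ℝ G x)
    (hgrad : ∀ x ∈ Y, ‖gradient G x‖ ≤ M) {x y : F} (hx : x ∈ Y) (hy : y ∈ Y) :
    G x - M * ‖y - x‖ ≤ G y := by
  have hfderiv : ∀ w ∈ Y, ‖fderiv ℝ G w‖ ≤ M := fun w hw => by
    simpa only [gradient, LinearIsometryEquiv.norm_map] using hgrad w hw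
  have hlip := hY.norm_image_sub_le_of_norm_fderiv_le hG hfderiv hx hy
  rw [Real.norm_eq_abs] at hlip
  linarith [neg_abs_le (G y - G x)]

lemma sub_ge_of_quadraticGrowth_of_norm_sub_le {E : Type*} [SeminormedAddCommGroup E]
    {G : E → ℝ} {μ M ε v : ℝ} {y z ystar : E} (hμ : 0 ≤ μ) (hM : 0 ≤ M)
    (hyz : ‖y - z‖ ≤ ε) (hlip : G z - M * ‖y - z‖ ≤ G y)
    (hgrowth : μ / 2 * ‖z - ystar‖ ^ 2 ≤ G z - v) :
    μ / 4 * ‖y - ystar‖ ^ 2 - M * ε - μ / 2 * ε ^ 2 ≤ G y - v := by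
  have hsq : ‖y - z‖ ^ 2 ≤ ε ^ 2 := pow_le_pow_left₀ (norm_nonneg _) hyz 2
  have htri := mul_le_mul_of_nonneg_left (norm_sub_sq_le_two_mul_add y z ystar) hμ
  nlinarith [mul_le_mul_of_nonneg_left hyz hM, mul_le_mul_of_nonneg_left hsq hμ]

theorem statement1_general {n : ℕ} (μ M ε : ℝ) (hμ : 0 < μ) (hM : 0 ≤ M)
    (Y S : Set (EuclideanSpace ℝ (Fin n)))
    (hYconv : Convex ℝ Y)
    (hSsub : S ⊆ Y) (hSclosed : IsClosed S) (hSne : S.Nonempty)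
    (G : EuclideanSpace ℝ (Fin n) → ℝ) (hGdiff : Differentiable ℝ G)
    (hgrad : ∀ y ∈ Y, ‖gradient G y‖ ≤ M)
    (ystar : EuclideanSpace ℝ (Fin n)) (v : ℝ)
    (hgrowth : ∀ z ∈ S, G z - v ≥ μ / 2 * ‖z - ystar‖ ^ 2)
    (y : EuclideanSpace ℝ (Fin n)) (hy : y ∈ Y) (hdist : Metric.infDist y S ≤ ε) :
    G y - v ≥ μ / 4 * ‖y - ystar‖ ^ 2 - M * ε - μ / 2 * ε ^ 2 := by
  obtain ⟨z, hzS, hz⟩ := hSclosed.exists_infDist_eq_dist hSne y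
  have hyz : ‖y - z‖ ≤ ε := by rwa [← dist_eq_norm, ← hz]
  exact sub_ge_of_quadraticGrowth_of_norm_sub_le hμ.le hM hyz
    (hYconv.sub_le_of_norm_gradient_le (fun x _ => hGdiff x) hgrad (hSsub hzS) hy)
    (hgrowth z hzS)

/-- Under quadratic growth of the lower-level objective on the feasible region
`S = 𝒴(x)` and boundedness of its gradient by `M` on `Y`, for any `y ∈ Y` with
`dist(y, S) ≤ ε`, we have `G(y) − v ≥ (μ/4)‖y − y*‖² − Mε − (μ/2)ε²`. -/
theorem statement1 {n : ℕ} (μ M ε : ℝ) (hμ : 0 < μ) (hM : 0 ≤ M) (hε : 0 ≤ ε)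
    (Y S : Set (EuclideanSpace ℝ (Fin n)))
    (hYconv : Convex ℝ Y) (hYcomp : IsCompact Y)
    (hSsub : S ⊆ Y) (hSconv : Convex ℝ S) (hSclosed : IsClosed S) (hSne : S.Nonempty)
    (G : EuclideanSpace ℝ (Fin n) → ℝ) (hGdiff : Differentiable ℝ G)
    (hGsc : StrongConvexOn Y μ G)
    (hgrad : ∀ y ∈ Y, ‖gradient G y‖ ≤ M)
    (ystar : EuclideanSpace ℝ (Fin n)) (v : ℝ)
    (hystar : ystar ∈ S) (hv : v = G ystar)
    (hmin : ∀ z ∈ S, v ≤ G z)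
    (hgrowth : ∀ z ∈ S, G z - v ≥ μ / 2 * ‖z - ystar‖ ^ 2)
    (y : EuclideanSpace ℝ (Fin n)) (hy : y ∈ Y) (hdist : Metric.infDist y S ≤ ε) :
    G y - v ≥ μ / 4 * ‖y - ystar‖ ^ 2 - M * ε - μ / 2 * ε ^ 2 :=
  statement1_general μ M ε hμ hM Y S hYconv hSsub hSclosed hSne G hGdiff hgrad ystar v hgrowth y hy
    hdist
end

section
/- If φ : ℝᵖ → ℝ is ρ-strongly convex (ρ ≥ 0) and lower semicontinuous, then its Moreau envelope e^γ(z) = min_λ φ(λ) + (γ/2)‖λ−z‖² is (1/γ + 1/ρ)^{-1}-strongly convex in z. -/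
/-!
Write `F(l, z) = φ l + (γ/2)‖l - z‖²`. Along a convex combination of two pairs `(lᵢ, zᵢ)`, the
strong convexity of `φ` and the parallelogram identity for `‖·‖²` give a defect of
`(a b / 2) (ρ ‖l₁ - l₂‖² + γ ‖(l₁ - z₁) - (l₂ - z₂)‖²)`, and since `z₁ - z₂` is the difference of the
two vectors inside the norms, Cauchy–Schwarz bounds this defect below by
`(a b / 2) (1/γ + 1/ρ)⁻¹ ‖z₁ - z₂‖²`. Taking infima over `l₁, l₂` transfers the inequality to the
envelope; the infima are finite because a lower semicontinuous convex function is bounded below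
on the unit ball, hence has an affine lower bound in `‖l‖`.
-/

open Set Metric

noncomputable def moreauEnvelope {E : Type*} [NormedAddCommGroup E] (γ : ℝ) (φ : E → ℝ)
    (z : E) : ℝ :=
  ⨅ l, φ l + γ / 2 * ‖l - z‖ ^ 2

lemma add_sq_le_inv_add_inv_mul {ρ γ : ℝ} (hρ : 0 < ρ) (hγ : 0 < γ) (s r : ℝ) :
    (s + r) ^ 2 ≤ (1 / ρ + 1 / γ) * (ρ * s ^ 2 + γ * r ^ 2) := by
  have key : (1 / ρ + 1 / γ) * (ρ * s ^ 2 + γ * r ^ 2) - (s + r) ^ 2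
      = (γ * r - ρ * s) ^ 2 / (ρ * γ) := by
    field_simp
    ring
  have : 0 ≤ (γ * r - ρ * s) ^ 2 / (ρ * γ) := by positivity
  linarith

section NormedSpace

variable {E : Type*} [NormedAddCommGroup E]

lemma inv_add_inv_mul_norm_sub_sq_le {ρ γ : ℝ} (hρ : 0 < ρ) (hγ : 0 < γ) (u v : E) :
    (1 / γ + 1 / ρ)⁻¹ * ‖u - v‖ ^ 2 ≤ ρ * ‖u‖ ^ 2 + γ * ‖v‖ ^ 2 := by
  have hsq : ‖u - v‖ ^ 2 ≤ (1 / ρ + 1 / γ) * (ρ * ‖u‖ ^ 2 + γ * ‖v‖ ^ 2) :=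
    (pow_le_pow_left₀ (norm_nonneg _) (norm_sub_le u v) 2).trans
      (add_sq_le_inv_add_inv_mul hρ hγ _ _)
  calc (1 / γ + 1 / ρ)⁻¹ * ‖u - v‖ ^ 2
      ≤ (1 / γ + 1 / ρ)⁻¹ * ((1 / ρ + 1 / γ) * (ρ * ‖u‖ ^ 2 + γ * ‖v‖ ^ 2)) := by
        gcongr
    _ = ρ * ‖u‖ ^ 2 + γ * ‖v‖ ^ 2 := by
        rw [add_comm (1 / ρ), inv_mul_cancel_left₀ (by positivity)]

lemma bddBelow_range_add_sq_norm_sub_of_le {f : E → ℝ} {K γ : ℝ} (hK : 0 ≤ K) (hγ : 0 < γ)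
    (hf : ∀ x, -(K * (‖x‖ + 1)) ≤ f x) (z : E) :
    BddBelow (range fun l => f l + γ / 2 * ‖l - z‖ ^ 2) := by
  refine ⟨-(K * (‖z‖ + 1)) - K ^ 2 / (2 * γ), ?_⟩
  rintro _ ⟨l, rfl⟩
  have htri : K * ‖l‖ ≤ K * (‖l - z‖ + ‖z‖) :=
    mul_le_mul_of_nonneg_left (norm_le_norm_sub_add l z) hK
  have hsq : 0 ≤ γ / 2 * ‖l - z‖ ^ 2 - K * ‖l - z‖ + K ^ 2 / (2 * γ) := by
    have : γ / 2 * ‖l - z‖ ^ 2 - K * ‖l - z‖ + K ^ 2 / (2 * γ)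
        = (γ * ‖l - z‖ - K) ^ 2 / (2 * γ) := by
      field_simp
      ring
    rw [this]
    positivity
  have := hf l
  dsimp only
  nlinarith

variable [NormedSpace ℝ E]

/-- Convexity propagates the lower bound `c` from the unit ball outwards: for `‖x‖ > 1` the point
`x / ‖x‖` lies on the segment from `0` to `x`. -/
lemma ConvexOn.neg_mul_norm_add_one_le {f : E → ℝ} (hf : ConvexOn ℝ univ f) {c : ℝ}
    (hc : ∀ x ∈ closedBall (0 : E) 1, c ≤ f x) (x : E) :
    -((|c| + |f 0|) * (‖x‖ + 1)) ≤ f x := by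
  rcases le_or_gt ‖x‖ 1 with hx | hx
  · have := hc x (mem_closedBall_zero_iff.2 hx)
    nlinarith [neg_abs_le c, abs_nonneg (f 0), norm_nonneg x, abs_nonneg c]
  have hx₀ : 0 < ‖x‖ := one_pos.trans hx
  have hball : ‖x‖⁻¹ • x ∈ closedBall (0 : E) 1 := by
    rw [mem_closedBall_zero_iff, norm_smul, norm_inv, norm_norm, inv_mul_cancel₀ hx₀.ne']
  have hseg : f (‖x‖⁻¹ • x) ≤ (1 - ‖x‖⁻¹) * f 0 + ‖x‖⁻¹ * f x := by
    simpa using hf.2 (mem_univ 0) (mem_univ x) (sub_nonneg.2 (inv_le_one_of_one_le₀ hx.le))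
      (inv_nonneg.2 hx₀.le) (sub_add_cancel 1 ‖x‖⁻¹)
  have hscaled : ‖x‖ * c ≤ (‖x‖ - 1) * f 0 + f x := by
    have := mul_le_mul_of_nonneg_left ((hc _ hball).trans hseg) hx₀.le
    rwa [mul_add, ← mul_assoc, ← mul_assoc, mul_sub, mul_one, mul_inv_cancel₀ hx₀.ne',
      one_mul] at this
  nlinarith [neg_abs_le c, neg_abs_le (f 0), le_abs_self (f 0), abs_nonneg c, abs_nonneg (f 0)]

lemma ConvexOn.bddBelow_range_add_sq_norm_sub [ProperSpace E] {f : E → ℝ}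
    (hf : ConvexOn ℝ univ f) (hlsc : LowerSemicontinuous f) {γ : ℝ} (hγ : 0 < γ) (z : E) :
    BddBelow (range fun l => f l + γ / 2 * ‖l - z‖ ^ 2) := by
  obtain ⟨c, hc⟩ :=
    (hlsc.lowerSemicontinuousOn _).bddBelow_of_isCompact (isCompact_closedBall (0 : E) 1)
  exact bddBelow_range_add_sq_norm_sub_of_le (by positivity) hγ
    (hf.neg_mul_norm_add_one_le fun x hx => hc ⟨x, hx, rfl⟩) z

end NormedSpace

section InnerProductSpace

variable {E : Type*} [NormedAddCommGroup E] [InnerProductSpace ℝ E]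

lemma norm_smul_add_smul_sq {a b : ℝ} (hab : a + b = 1) (x y : E) :
    ‖a • x + b • y‖ ^ 2 = a * ‖x‖ ^ 2 + b * ‖y‖ ^ 2 - a * b * ‖x - y‖ ^ 2 := by
  rw [norm_add_sq_real, norm_sub_sq_real, norm_smul, norm_smul, real_inner_smul_left,
    real_inner_smul_right, mul_pow, mul_pow, Real.norm_eq_abs, Real.norm_eq_abs, sq_abs, sq_abs]
  obtain rfl := eq_sub_of_add_eq hab
  ring

lemma StrongConvexOn.add_sq_norm_sub_convexComb_le {φ : E → ℝ} {ρ γ : ℝ} (hρ : 0 < ρ)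
    (hγ : 0 < γ) (hφ : StrongConvexOn univ ρ φ) {a b : ℝ} (ha : 0 ≤ a) (hb : 0 ≤ b)
    (hab : a + b = 1) (l₁ l₂ z₁ z₂ : E) :
    φ (a • l₁ + b • l₂) + γ / 2 * ‖(a • l₁ + b • l₂) - (a • z₁ + b • z₂)‖ ^ 2
      ≤ a * (φ l₁ + γ / 2 * ‖l₁ - z₁‖ ^ 2) + b * (φ l₂ + γ / 2 * ‖l₂ - z₂‖ ^ 2)
        - a * b * ((1 / γ + 1 / ρ)⁻¹ / 2 * ‖z₁ - z₂‖ ^ 2) := by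
  have hφ_comb : φ (a • l₁ + b • l₂) ≤ a * φ l₁ + b * φ l₂ - a * b * (ρ / 2 * ‖l₁ - l₂‖ ^ 2) := by
    simpa using hφ.2 (mem_univ l₁) (mem_univ l₂) ha hb hab
  have hnorm : ‖(a • l₁ + b • l₂) - (a • z₁ + b • z₂)‖ ^ 2
      = a * ‖l₁ - z₁‖ ^ 2 + b * ‖l₂ - z₂‖ ^ 2 - a * b * ‖(l₁ - z₁) - (l₂ - z₂)‖ ^ 2 := by
    rw [← norm_smul_add_smul_sq hab]
    congr 2
    module
  have hdefect : (1 / γ + 1 / ρ)⁻¹ * ‖z₁ - z₂‖ ^ 2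
      ≤ ρ * ‖l₁ - l₂‖ ^ 2 + γ * ‖(l₁ - z₁) - (l₂ - z₂)‖ ^ 2 := by
    have := inv_add_inv_mul_norm_sub_sq_le hρ hγ (l₁ - l₂) ((l₁ - z₁) - (l₂ - z₂))
    rwa [show (l₁ - l₂) - ((l₁ - z₁) - (l₂ - z₂)) = z₁ - z₂ by abel] at this
  have := mul_le_mul_of_nonneg_left hdefect (mul_nonneg ha hb)
  rw [hnorm]
  nlinarith

lemma StrongConvexOn.strongConvexOn_moreauEnvelope {φ : E → ℝ} {ρ γ : ℝ} (hρ : 0 < ρ) (hγ : 0 < γ)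
    (hφ : StrongConvexOn univ ρ φ)
    (hbdd : ∀ z, BddBelow (range fun l => φ l + γ / 2 * ‖l - z‖ ^ 2)) :
    StrongConvexOn univ (1 / γ + 1 / ρ)⁻¹ (moreauEnvelope γ φ) := by
  refine ⟨convex_univ, fun z₁ _ z₂ _ a b ha hb hab => ?_⟩
  unfold moreauEnvelope
  rw [smul_eq_mul, smul_eq_mul, Real.mul_iInf_of_nonneg ha, Real.mul_iInf_of_nonneg hb,
    le_sub_iff_add_le]
  refine le_ciInf_add_ciInf fun l₁ l₂ => ?_
  have := ciInf_le (hbdd (a • z₁ + b • z₂)) (a • l₁ + b • l₂)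
  have := hφ.add_sq_norm_sub_convexComb_le hρ hγ ha hb hab l₁ l₂ z₁ z₂
  linarith

end InnerProductSpace

/-- If `φ : ℝᵖ → ℝ` is `ρ`-strongly convex (`ρ > 0`) and lower semicontinuous,
then its Moreau envelope `e^γ(z) = inf_λ (φ(λ) + (γ/2)‖λ − z‖²)` is
`(1/γ + 1/ρ)⁻¹`-strongly convex in `z`. -/
theorem statement3 {p : ℕ} (φ : EuclideanSpace ℝ (Fin p) → ℝ) (ρ γ : ℝ)
    (hρ : 0 < ρ) (hγ : 0 < γ)
    (hφ : StrongConvexOn Set.univ ρ φ) (hlsc : LowerSemicontinuous φ) :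
    StrongConvexOn Set.univ (1 / γ + 1 / ρ)⁻¹
      (fun z : EuclideanSpace ℝ (Fin p) =>
        ⨅ l : EuclideanSpace ℝ (Fin p), (φ l + γ / 2 * ‖l - z‖ ^ 2)) :=
  hφ.strongConvexOn_moreauEnvelope hρ hγ
    ((strongConvexOn_zero.1 (hφ.mono hρ.le)).bddBelow_range_add_sq_norm_sub hlsc hγ)
end

section
/- Consider scalar recursions where λ⁰ = 0 and for each j ≥ 0, λ^{j+1} ≤ (1 − ργ₂/(j+1)) λ^j + (ρ/(j+1))(γ₂ a + b) with λ^j ≥ 0, ρ γ₂ ≥ 1, a, b ≥ 0. Then λ^j ≤ ρ(γ₂ a + b) for all j ≥ 1. -/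
/-!
The bound `β` is preserved by one step of `u (n + 1) ≤ (1 - κ / (n + 1)) u n + β / (n + 1)`:
when the coefficient is nonnegative the right-hand side is `β - (κ - 1) β / (n + 1) ≤ β`, and when
it is negative it is at most `β / (n + 1) ≤ β` because `u n ≥ 0`. From `u 0 = 0` the first step
gives `u 1 ≤ β`, and nonnegativity of `u 1` forces `β ≥ 0`.
-/

lemma le_of_le_one_sub_div_mul_add_div {κ β t x y : ℝ} (hκ : 1 ≤ κ) (hβ : 0 ≤ β) (ht : 1 ≤ t)
    (hx : 0 ≤ x) (hxβ : x ≤ β) (hy : y ≤ (1 - κ / t) * x + β / t) : y ≤ β := by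
  have ht₀ : 0 < t := one_pos.trans_le ht
  have hβt : β / t ≤ β := div_le_self hβ ht
  rcases le_or_gt 0 (1 - κ / t) with hc | hc
  · calc y ≤ (1 - κ / t) * β + β / t := hy.trans (by gcongr)
      _ = β - (κ - 1) * β / t := by ring
      _ ≤ β := sub_le_self _ (div_nonneg (mul_nonneg (by linarith) hβ) ht₀.le)
  · calc y ≤ (1 - κ / t) * x + β / t := hy
      _ ≤ β / t := by linarith [mul_nonpos_of_nonpos_of_nonneg hc.le hx]
      _ ≤ β := hβt

theorem le_of_le_one_sub_div_succ_mul_add {κ β : ℝ} {u : ℕ → ℝ} (hκ : 1 ≤ κ)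
    (hu : ∀ n, 0 ≤ u n) (h0 : u 0 = 0)
    (hrec : ∀ n : ℕ, u (n + 1) ≤ (1 - κ / ((n : ℝ) + 1)) * u n + β / ((n : ℝ) + 1)) :
    ∀ n, 1 ≤ n → u n ≤ β := by
  have hu₁ : u 1 ≤ β := by simpa [h0] using hrec 0
  have hβ : 0 ≤ β := (hu 1).trans hu₁
  intro n hn
  induction n, hn using Nat.le_induction with
  | base => exact hu₁
  | succ n _ ih =>
    exact le_of_le_one_sub_div_mul_add_div hκ hβ (by simp) (hu n) ih (hrec n)

theorem statement9_general (ρ γ₂ a b : ℝ) (h1 : 1 ≤ ρ * γ₂)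
    (lam : ℕ → ℝ) (hnn : ∀ j, 0 ≤ lam j) (h0 : lam 0 = 0)
    (hrec : ∀ j : ℕ,
      lam (j + 1) ≤ (1 - ρ * γ₂ / ((j : ℝ) + 1)) * lam j + ρ / ((j : ℝ) + 1) * (γ₂ * a + b)) :
    ∀ j : ℕ, 1 ≤ j → lam j ≤ ρ * (γ₂ * a + b) :=
  le_of_le_one_sub_div_succ_mul_add h1 hnn h0 fun j => (hrec j).trans_eq (by ring)

/-- Scalar recursion: if `λ⁰ = 0`, `λʲ ≥ 0`, `ργ₂ ≥ 1`, `a, b ≥ 0`, and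
`λ^{j+1} ≤ (1 − ργ₂/(j+1)) λ^j + (ρ/(j+1))(γ₂ a + b)` for all `j ≥ 0`, then
`λ^j ≤ ρ(γ₂ a + b)` for all `j ≥ 1`. -/
theorem statement9 (ρ γ₂ a b : ℝ) (hρ : 0 < ρ) (hγ₂ : 0 < γ₂) (h1 : 1 ≤ ρ * γ₂)
    (ha : 0 ≤ a) (hb : 0 ≤ b)
    (lam : ℕ → ℝ) (hnn : ∀ j, 0 ≤ lam j) (h0 : lam 0 = 0)
    (hrec : ∀ j : ℕ,
      lam (j + 1) ≤ (1 - ρ * γ₂ / ((j : ℝ) + 1)) * lam j + ρ / ((j : ℝ) + 1) * (γ₂ * a + b)) :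
    ∀ j : ℕ, 1 ≤ j → lam j ≤ ρ * (γ₂ * a + b) :=
  statement9_general ρ γ₂ a b h1 lam hnn h0 hrec
end

section
/- Projected (stochastic) gradient descent one-step decrease for strongly convex functions: let Y be convex closed, f : ℝⁿ → ℝ μ-strongly convex and differentiable, w⁺ = Proj_Y(w − η g) for some vector g, then for all u ∈ Y: ⟨g, w⁺ − u⟩ ≤ −(1/η)⟨w⁺ − w, w⁺ − u⟩, and consequently f(w) − f(u) + (1/(2η))‖w⁺ − u‖² ≤ (1/2)(1/η − μ)‖w − u‖² + (η/2)‖g‖² + ⟨∇f(w) − g, w − u⟩. -/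
open scoped RealInnerProductSpace

/-!
The variational inequality characterising `w⁺` says that `w⁺` is at least as close as
`w - η g` to every `u ∈ Y`, so `‖w⁺ - u‖² ≤ ‖w - u‖² - 2η⟪g, w - u⟫ + η²‖g‖²`. Adding this,
divided by `2η`, to the first-order inequality `f u ≥ f w + ⟪∇f w, u - w⟫ + μ/2 ‖u - w‖²`
of strong convexity gives the decrease estimate.
-/

theorem ConvexOn.add_le_of_hasFDerivAt {E : Type*} [NormedAddCommGroup E] [NormedSpace ℝ E]
    {s : Set E} {φ : E → ℝ} {φ' : E →L[ℝ] ℝ} {x y : E} (hφ : ConvexOn ℝ s φ)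
    (hx : x ∈ s) (hy : y ∈ s) (hd : HasFDerivAt φ φ' x) :
    φ x + φ' (y - x) ≤ φ y := by
  have hd₀ : HasFDerivAt φ φ' (AffineMap.lineMap x y (0 : ℝ)) := by simpa using hd
  have hslope := (hφ.comp_affineMap (AffineMap.lineMap x y)).le_slope_of_hasDerivAt
    (by simpa using hx) (by simpa using hy) zero_lt_one
    (hd₀.comp_hasDerivAt 0 AffineMap.hasDerivAt_lineMap)
  simpa only [slope_def_field, Function.comp_apply, AffineMap.lineMap_apply_one,
    AffineMap.lineMap_apply_zero, sub_zero, div_one, le_sub_iff_add_le'] using hslope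

section InnerProductSpace

variable {F : Type*} [NormedAddCommGroup F] [InnerProductSpace ℝ F]

theorem StrongConvexOn.add_le_of_hasGradientAt [CompleteSpace F]
    {s : Set F} {m : ℝ} {f : F → ℝ} {f' x y : F} (hf : StrongConvexOn s m f)
    (hx : x ∈ s) (hy : y ∈ s) (hd : HasGradientAt f f' x) :
    f x + ⟪f', y - x⟫ + m / 2 * ‖y - x‖ ^ 2 ≤ f y := by
  have hφ' := (hasGradientAt_iff_hasFDerivAt.mp hd).sub
    ((hasStrictFDerivAt_norm_sq x).hasFDerivAt.const_mul (m / 2))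
  have key := (strongConvexOn_iff_convex.mp hf).add_le_of_hasFDerivAt hx hy hφ'
  simp only [sub_apply, InnerProductSpace.toDual_apply_apply,
    smul_apply, coe_innerSL_apply, nsmul_eq_mul, Nat.cast_ofNat,
    smul_eq_mul] at key
  have hsq : ‖y‖ ^ 2 = ‖x‖ ^ 2 + 2 * ⟪x, y - x⟫ + ‖y - x‖ ^ 2 := by
    rw [← norm_add_sq_real, add_sub_cancel]
  linear_combination key - m / 2 * hsq

theorem norm_sub_sq_le_of_inner_sub_nonpos {z p u : F} (h : ⟪z - p, u - p⟫ ≤ 0) :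
    ‖p - u‖ ^ 2 ≤ ‖z - u‖ ^ 2 := by
  have hsplit : ‖z - u‖ ^ 2 = ‖z - p‖ ^ 2 + 2 * ⟪z - p, p - u⟫ + ‖p - u‖ ^ 2 := by
    rw [← norm_add_sq_real, sub_add_sub_cancel]
  have hflip : ⟪z - p, p - u⟫ = -⟪z - p, u - p⟫ := by
    rw [← inner_neg_right, neg_sub]
  nlinarith [sq_nonneg ‖z - p‖]

variable {η : ℝ} {w g w' u : F}

theorem inner_le_of_projected_step (hη : 0 < η) (h : ⟪(w - η • g) - w', u - w'⟫ ≤ 0) :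
    ⟪g, w' - u⟫ ≤ -(1 / η) * ⟪w' - w, w' - u⟫ := by
  have hexpand : ⟪(w - η • g) - w', u - w'⟫ = ⟪w' - w, w' - u⟫ + η * ⟪g, w' - u⟫ := by
    rw [show (w - η • g) - w' = -((w' - w) + η • g) by abel, ← neg_sub w' u, inner_neg_neg,
      inner_add_left, real_inner_smul_left]
  rw [neg_mul, one_div, ← div_eq_inv_mul, le_neg, div_le_iff₀ hη]
  linarith

theorem norm_sub_sq_le_of_projected_step (h : ⟪(w - η • g) - w', u - w'⟫ ≤ 0) :
    ‖w' - u‖ ^ 2 ≤ ‖w - u‖ ^ 2 - 2 * η * ⟪g, w - u⟫ + η ^ 2 * ‖g‖ ^ 2 := by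
  calc ‖w' - u‖ ^ 2 ≤ ‖(w - u) - η • g‖ ^ 2 := by
        rw [sub_right_comm]; exact norm_sub_sq_le_of_inner_sub_nonpos h
    _ = ‖w - u‖ ^ 2 - 2 * η * ⟪g, w - u⟫ + η ^ 2 * ‖g‖ ^ 2 := by
        rw [norm_sub_sq_real, real_inner_smul_right, norm_smul, mul_pow, Real.norm_eq_abs, sq_abs,
          real_inner_comm]
        ring

end InnerProductSpace

theorem statement11_general {n : ℕ} (μ η : ℝ) (hη : 0 < η)
    (Y : Set (EuclideanSpace ℝ (Fin n)))
    (f : EuclideanSpace ℝ (Fin n) → ℝ)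
    (hf : StrongConvexOn Set.univ μ f) (hfdiff : Differentiable ℝ f)
    (w : EuclideanSpace ℝ (Fin n))
    (g : EuclideanSpace ℝ (Fin n))
    (wplus : EuclideanSpace ℝ (Fin n))
    (hproj : ∀ u ∈ Y, ⟪(w - η • g) - wplus, u - wplus⟫ ≤ 0) :
    ∀ u ∈ Y,
      ⟪g, wplus - u⟫ ≤ -(1 / η) * ⟪wplus - w, wplus - u⟫ ∧
      f w - f u + 1 / (2 * η) * ‖wplus - u‖ ^ 2 ≤
        1 / 2 * (1 / η - μ) * ‖w - u‖ ^ 2 + η / 2 * ‖g‖ ^ 2 +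
          ⟪gradient f w - g, w - u⟫ := by
  intro u hu
  refine ⟨inner_le_of_projected_step hη (hproj u hu), ?_⟩
  have hstrong := hf.add_le_of_hasGradientAt (Set.mem_univ w) (Set.mem_univ u)
    (hfdiff w).hasGradientAt
  have hstep := norm_sub_sq_le_of_projected_step (hproj u hu)
  have hgrad : f w - f u ≤ ⟪gradient f w, w - u⟫ - μ / 2 * ‖w - u‖ ^ 2 := by
    rw [norm_sub_rev, ← neg_sub w u, inner_neg_right] at hstrong
    linarith
  have hcross : ⟪g, w - u⟫ + 1 / (2 * η) * ‖wplus - u‖ ^ 2 ≤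
      1 / (2 * η) * ‖w - u‖ ^ 2 + η / 2 * ‖g‖ ^ 2 := by
    field_simp
    linarith
  rw [inner_sub_left]
  linear_combination hgrad + hcross

/-- Projected (stochastic) gradient descent one-step decrease for strongly
convex functions: `Y` closed convex, `f` `μ`-strongly convex differentiable,
`w⁺ = Proj_Y(w − η g)` (characterized by the variational inequality), then for all `u ∈ Y`:
`⟨g, w⁺ − u⟩ ≤ −(1/η)⟨w⁺ − w, w⁺ − u⟩`, and consequently
`f(w) − f(u) + (1/(2η))‖w⁺ − u‖² ≤ (1/2)(1/η − μ)‖w − u‖² + (η/2)‖g‖² + ⟨∇f(w) − g, w − u⟩`. -/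
theorem statement11 {n : ℕ} (μ η : ℝ) (hμ : 0 < μ) (hη : 0 < η)
    (Y : Set (EuclideanSpace ℝ (Fin n)))
    (hYne : Y.Nonempty) (hYclosed : IsClosed Y) (hYconv : Convex ℝ Y)
    (f : EuclideanSpace ℝ (Fin n) → ℝ)
    (hf : StrongConvexOn Set.univ μ f) (hfdiff : Differentiable ℝ f)
    (w : EuclideanSpace ℝ (Fin n)) (hw : w ∈ Y)
    (g : EuclideanSpace ℝ (Fin n))
    (wplus : EuclideanSpace ℝ (Fin n)) (hwplus : wplus ∈ Y)
    (hproj : ∀ u ∈ Y, ⟪(w - η • g) - wplus, u - wplus⟫ ≤ 0) :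
    ∀ u ∈ Y,
      ⟪g, wplus - u⟫ ≤ -(1 / η) * ⟪wplus - w, wplus - u⟫ ∧
      f w - f u + 1 / (2 * η) * ‖wplus - u‖ ^ 2 ≤
        1 / 2 * (1 / η - μ) * ‖w - u‖ ^ 2 + η / 2 * ‖g‖ ^ 2 +
          ⟪gradient f w - g, w - u⟫ :=
  statement11_general μ η hη Y f hf hfdiff w g wplus hproj
end

section
/- Partial penalty exactness (deterministic): suppose F is L_F-Lipschitz in y, G(x,·) has (μ/2)-quadratic growth around y*(x) on the feasible region in the relaxed sense G(x,y) − v(x) ≥ (μ/2)‖y − y*(x)‖² − √2 B ε₂ whenever (1/2)Σᵢ[Hᵢ(x,y)]₊² ≤ ε₂². Then for the penalized objective Φ_c(x,y) = F(x,y) + c (G(x,y) − v(x)), one has Φ_c(x,y) − F(x, y*(x)) ≥ −L_F²/(2 c μ) − c √2 B ε₂ for all (x,y) with (1/2)Σᵢ[Hᵢ(x,y)]₊² ≤ ε₂². -/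
/-! The Lipschitz bound gives `F x y - F x (y* x) ≥ -L_F t` with `t = ‖y - y* x‖`, and the relaxed
growth gives `c (G x y - v x) ≥ (cμ/2) t² - c √2 B ε₂`. Their sum is a quadratic in `t` whose minimum
over the reals is `-L_F² / (2cμ)`. -/

lemma neg_sq_div_two_mul_le_half_mul_sq_sub_mul {κ : ℝ} (hκ : 0 < κ) (L t : ℝ) :
    -(L ^ 2 / (2 * κ)) ≤ κ / 2 * t ^ 2 - L * t := by
  have h : 0 ≤ (κ * t - L) ^ 2 / (2 * κ) := by positivity
  have hκ' : κ ≠ 0 := hκ.ne'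
  calc -(L ^ 2 / (2 * κ)) ≤ -(L ^ 2 / (2 * κ)) + (κ * t - L) ^ 2 / (2 * κ) := by linarith
    _ = κ / 2 * t ^ 2 - L * t := by field_simp; ring

theorem statement14_general {m n p : ℕ} (μ LF B c ε₂ : ℝ)
    (hμ : 0 < μ) (hc : 0 < c)
    (F G : EuclideanSpace ℝ (Fin m) → EuclideanSpace ℝ (Fin n) → ℝ)
    (H : EuclideanSpace ℝ (Fin m) → EuclideanSpace ℝ (Fin n) → Fin p → ℝ)
    (v : EuclideanSpace ℝ (Fin m) → ℝ)
    (ystar : EuclideanSpace ℝ (Fin m) → EuclideanSpace ℝ (Fin n))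
    (hFLip : ∀ x y₁ y₂, |F x y₁ - F x y₂| ≤ LF * ‖y₁ - y₂‖)
    (hgrowth : ∀ x y, (1 / 2) * ∑ i, (max (H x y i) 0) ^ 2 ≤ ε₂ ^ 2 →
      G x y - v x ≥ μ / 2 * ‖y - ystar x‖ ^ 2 - Real.sqrt 2 * B * ε₂) :
    ∀ x y, (1 / 2) * ∑ i, (max (H x y i) 0) ^ 2 ≤ ε₂ ^ 2 →
      F x y + c * (G x y - v x) - F x (ystar x) ≥
        -(LF ^ 2 / (2 * c * μ)) - c * Real.sqrt 2 * B * ε₂ := by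
  intro x y hfeas
  set t := ‖y - ystar x‖
  have hF : -(LF * t) ≤ F x y - F x (ystar x) := neg_le_of_abs_le (hFLip x y (ystar x))
  have hG : c * (μ / 2 * t ^ 2 - Real.sqrt 2 * B * ε₂) ≤ c * (G x y - v x) :=
    mul_le_mul_of_nonneg_left (hgrowth x y hfeas) hc.le
  have hquad := neg_sq_div_two_mul_le_half_mul_sq_sub_mul (mul_pos hc hμ) LF t
  rw [← mul_assoc] at hquad
  linarith

/-- Partial penalty exactness (deterministic): suppose `F` is `L_F`-Lipschitz in
`y`, and the relaxed quadratic growth `G(x,y) − v(x) ≥ (μ/2)‖y − y*(x)‖² − √2 B ε₂` holds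
whenever `(1/2)Σᵢ[Hᵢ(x,y)]₊² ≤ ε₂²`. Then for `Φ_c(x,y) = F(x,y) + c(G(x,y) − v(x))`,
`Φ_c(x,y) − F(x, y*(x)) ≥ −L_F²/(2cμ) − c√2 B ε₂` for all `(x,y)` with
`(1/2)Σᵢ[Hᵢ(x,y)]₊² ≤ ε₂²`. -/
theorem statement14 {m n p : ℕ} (μ LF B c ε₂ : ℝ)
    (hμ : 0 < μ) (hLF : 0 ≤ LF) (hB : 0 < B) (hc : 0 < c) (hε₂ : 0 ≤ ε₂)
    (F G : EuclideanSpace ℝ (Fin m) → EuclideanSpace ℝ (Fin n) → ℝ)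
    (H : EuclideanSpace ℝ (Fin m) → EuclideanSpace ℝ (Fin n) → Fin p → ℝ)
    (v : EuclideanSpace ℝ (Fin m) → ℝ)
    (ystar : EuclideanSpace ℝ (Fin m) → EuclideanSpace ℝ (Fin n))
    (hFLip : ∀ x y₁ y₂, |F x y₁ - F x y₂| ≤ LF * ‖y₁ - y₂‖)
    (hgrowth : ∀ x y, (1 / 2) * ∑ i, (max (H x y i) 0) ^ 2 ≤ ε₂ ^ 2 →
      G x y - v x ≥ μ / 2 * ‖y - ystar x‖ ^ 2 - Real.sqrt 2 * B * ε₂) :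
    ∀ x y, (1 / 2) * ∑ i, (max (H x y i) 0) ^ 2 ≤ ε₂ ^ 2 →
      F x y + c * (G x y - v x) - F x (ystar x) ≥
        -(LF ^ 2 / (2 * c * μ)) - c * Real.sqrt 2 * B * ε₂ :=
  statement14_general μ LF B c ε₂ hμ hc F G H v ystar hFLip hgrowth
end

section
/- Exactness of the full penalty: under the bound G(x,y) − v(x) ≥ (μ/2)‖y − y*(x)‖² − ⟨λ*(x), H(x,y)⟩ with ‖λ*(x)‖ ≤ B, and F L_F-Lipschitz in y, the penalized function Φ(x,y) = F(x,y) + c₁(G(x,y) − v(x)) + (c₂/2)Σᵢ[Hᵢ(x,y)]₊² satisfies Φ(x,y) − F(x, y*(x)) ≥ −L_F²/(2 c₁ μ) − c₁² B²/(2 c₂) for all (x,y) ∈ X × Y. -/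
/-!
Bound `F x y - F x (y* x) ≥ -L_F ‖y - y* x‖` and use the growth condition on `G - v`; the quadratic
term `(c₁ μ / 2) ‖y - y* x‖²` absorbs the Lipschitz loss at the price `L_F² / (2 c₁ μ)`, and the
penalty `(c₂ / 2) Σ [Hᵢ]₊²` absorbs the multiplier term `-c₁ ⟨λ*, H⟩` at the price
`c₁² ‖λ*‖² / (2 c₂) ≤ c₁² B² / (2 c₂)`, both by Young's inequality.
-/

open Finset

theorem mul_le_sq_div_add_mul_sq {k : ℝ} (hk : 0 < k) (a b : ℝ) :
    a * b ≤ a ^ 2 / (2 * k) + k / 2 * b ^ 2 := by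
  have h := two_mul_le_add_mul_sq (a := a) (b := b) (inv_pos.mpr hk)
  rw [inv_inv] at h
  calc a * b ≤ (k⁻¹ * a ^ 2 + k * b ^ 2) / 2 := by linarith
    _ = a ^ 2 / (2 * k) + k / 2 * b ^ 2 := by field_simp

theorem mul_sum_mul_le_norm_sq_add_sum_max_sq {ι : Type*} [Fintype ι] {c d : ℝ} (hc : 0 ≤ c)
    (hd : 0 < d) (lam : EuclideanSpace ℝ ι) (hlam : ∀ i, 0 ≤ lam i) (h : ι → ℝ) :
    c * ∑ i, lam i * h i ≤ c ^ 2 * ‖lam‖ ^ 2 / (2 * d) + d / 2 * ∑ i, max (h i) 0 ^ 2 := by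
  rw [EuclideanSpace.real_norm_sq_eq, mul_sum, mul_sum, mul_sum, sum_div, ← sum_add_distrib]
  refine sum_le_sum fun i _ => ?_
  calc c * (lam i * h i) ≤ (c * lam i) * max (h i) 0 := by
        rw [← mul_assoc]
        exact mul_le_mul_of_nonneg_left (le_max_left _ _) (mul_nonneg hc (hlam i))
    _ ≤ (c * lam i) ^ 2 / (2 * d) + d / 2 * max (h i) 0 ^ 2 := mul_le_sq_div_add_mul_sq hd _ _
    _ = c ^ 2 * lam i ^ 2 / (2 * d) + d / 2 * max (h i) 0 ^ 2 := by ring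

theorem statement15_general {m n p : ℕ} (μ LF B c₁ c₂ : ℝ)
    (hμ : 0 < μ) (hc₁ : 0 < c₁) (hc₂ : 0 < c₂)
    (F G : EuclideanSpace ℝ (Fin m) → EuclideanSpace ℝ (Fin n) → ℝ)
    (H : EuclideanSpace ℝ (Fin m) → EuclideanSpace ℝ (Fin n) → Fin p → ℝ)
    (v : EuclideanSpace ℝ (Fin m) → ℝ)
    (ystar : EuclideanSpace ℝ (Fin m) → EuclideanSpace ℝ (Fin n))
    (lamstar : EuclideanSpace ℝ (Fin m) → EuclideanSpace ℝ (Fin p))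
    (hlamnn : ∀ x i, 0 ≤ lamstar x i) (hlamB : ∀ x, ‖lamstar x‖ ≤ B)
    (hFLip : ∀ x y₁ y₂, |F x y₁ - F x y₂| ≤ LF * ‖y₁ - y₂‖)
    (hgrowth : ∀ x y,
      G x y - v x ≥ μ / 2 * ‖y - ystar x‖ ^ 2 - ∑ i, lamstar x i * H x y i) :
    ∀ x y,
      (F x y + c₁ * (G x y - v x) + c₂ / 2 * ∑ i, (max (H x y i) 0) ^ 2) - F x (ystar x) ≥
        -(LF ^ 2 / (2 * c₁ * μ)) - c₁ ^ 2 * B ^ 2 / (2 * c₂) := by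
  intro x y
  have hF : -(LF * ‖y - ystar x‖) ≤ F x y - F x (ystar x) := (abs_le.mp (hFLip x y (ystar x))).1
  have hG := mul_le_mul_of_nonneg_left (hgrowth x y) hc₁.le
  have hYoungF : LF * ‖y - ystar x‖ ≤ LF ^ 2 / (2 * c₁ * μ) + c₁ * μ / 2 * ‖y - ystar x‖ ^ 2 := by
    simpa only [mul_assoc] using mul_le_sq_div_add_mul_sq (mul_pos hc₁ hμ) LF ‖y - ystar x‖
  have hYoungH :=
    mul_sum_mul_le_norm_sq_add_sum_max_sq hc₁.le hc₂ (lamstar x) (hlamnn x) (H x y)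
  have hlamsq : c₁ ^ 2 * ‖lamstar x‖ ^ 2 / (2 * c₂) ≤ c₁ ^ 2 * B ^ 2 / (2 * c₂) := by
    gcongr
    exact hlamB x
  linarith

/-- Exactness of the full penalty: under the bound
`G(x,y) − v(x) ≥ (μ/2)‖y − y*(x)‖² − ⟨λ*(x), H(x,y)⟩` with `λ*(x) ≥ 0`, `‖λ*(x)‖ ≤ B`, and
`F` `L_F`-Lipschitz in `y`, the penalized function
`Φ(x,y) = F(x,y) + c₁(G(x,y) − v(x)) + (c₂/2)Σᵢ[Hᵢ(x,y)]₊²` satisfies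
`Φ(x,y) − F(x, y*(x)) ≥ −L_F²/(2c₁μ) − c₁²B²/(2c₂)` for all `(x,y)`. -/
theorem statement15 {m n p : ℕ} (μ LF B c₁ c₂ : ℝ)
    (hμ : 0 < μ) (hLF : 0 ≤ LF) (hB : 0 < B) (hc₁ : 0 < c₁) (hc₂ : 0 < c₂)
    (F G : EuclideanSpace ℝ (Fin m) → EuclideanSpace ℝ (Fin n) → ℝ)
    (H : EuclideanSpace ℝ (Fin m) → EuclideanSpace ℝ (Fin n) → Fin p → ℝ)
    (v : EuclideanSpace ℝ (Fin m) → ℝ)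
    (ystar : EuclideanSpace ℝ (Fin m) → EuclideanSpace ℝ (Fin n))
    (lamstar : EuclideanSpace ℝ (Fin m) → EuclideanSpace ℝ (Fin p))
    (hlamnn : ∀ x i, 0 ≤ lamstar x i) (hlamB : ∀ x, ‖lamstar x‖ ≤ B)
    (hFLip : ∀ x y₁ y₂, |F x y₁ - F x y₂| ≤ LF * ‖y₁ - y₂‖)
    (hgrowth : ∀ x y,
      G x y - v x ≥ μ / 2 * ‖y - ystar x‖ ^ 2 - ∑ i, lamstar x i * H x y i) :
    ∀ x y,
      (F x y + c₁ * (G x y - v x) + c₂ / 2 * ∑ i, (max (H x y i) 0) ^ 2) - F x (ystar x) ≥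
        -(LF ^ 2 / (2 * c₁ * μ)) - c₁ ^ 2 * B ^ 2 / (2 * c₂) :=
  statement15_general μ LF B c₁ c₂ hμ hc₁ hc₂ F G H v ystar lamstar hlamnn hlamB hFLip hgrowth
end

section
/- A biased projected SGD descent estimate: suppose Ψ : ℝᵈ → ℝ has L-Lipschitz gradient, u^{k+1} = Proj_U(u^k − α d^k) with U closed convex, α ≤ 1/(2L), and d^k = ∇Ψ(u^k) + b^k. Then Ψ(u^{k+1}) − Ψ(u^k) ≤ −(1/(4α))‖u^{k+1} − u^k‖² + (α/2)‖b^k‖². -/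
open scoped RealInnerProductSpace

/-!
Comparing `t ↦ Ψ (u + t • (u⁺ - u))` with its quadratic upper model on `[0, 1]` gives the descent
lemma `Ψ u⁺ ≤ Ψ u + ⟪∇Ψ u, u⁺ - u⟫ + L/2 ‖u⁺ - u‖²`. The variational inequality of the projection,
tested at `w = u`, gives `α ⟪d, u⁺ - u⟫ ≤ -‖u⁺ - u‖²`. Writing `∇Ψ u = d - b`, the bias cross term
is absorbed by Young's inequality and the curvature term by `2αL ≤ 1`.
-/

section

variable {E : Type*} [NormedAddCommGroup E] [InnerProductSpace ℝ E] [CompleteSpace E]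
  {f : E → ℝ}

theorem Differentiable.hasDerivAt_comp_add_smul (hf : Differentiable ℝ f) (x v : E) (t : ℝ) :
    HasDerivAt (fun s : ℝ => f (x + s • v)) ⟪gradient f (x + t • v), v⟫ t := by
  have hline : HasDerivAt (fun s : ℝ => x + s • v) v t := by
    simpa using ((hasDerivAt_id t).smul_const v).const_add x
  exact (hf _).hasGradientAt.hasFDerivAt.comp_hasDerivAt t hline

theorem Differentiable.le_add_inner_gradient_add_norm_sq (hf : Differentiable ℝ f) {L : ℝ}
    (hL : ∀ a b, ‖gradient f a - gradient f b‖ ≤ L * ‖a - b‖) (x y : E) :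
    f y ≤ f x + ⟪gradient f x, y - x⟫ + L / 2 * ‖y - x‖ ^ 2 := by
  set v := y - x
  set g : ℝ → ℝ := fun t => f (x + t • v) - t * ⟪gradient f x, v⟫ - L / 2 * t ^ 2 * ‖v‖ ^ 2
  have hg : ∀ t, HasDerivAt g
      (⟪gradient f (x + t • v), v⟫ - ⟪gradient f x, v⟫ - L * t * ‖v‖ ^ 2) t := fun t =>
    (((hf.hasDerivAt_comp_add_smul x v t).sub ((hasDerivAt_id t).mul_const _)).sub
      ((((hasDerivAt_id t).pow 2).const_mul (L / 2)).mul_const _)).congr_deriv (by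
        simp only [id]; ring)
  have hg' : ∀ t ∈ interior (Set.Ici (0 : ℝ)),
      ⟪gradient f (x + t • v), v⟫ - ⟪gradient f x, v⟫ - L * t * ‖v‖ ^ 2 ≤ 0 := by
    intro t ht
    rw [interior_Ici] at ht
    have hdist : ‖(x + t • v) - x‖ = t * ‖v‖ := by
      simp [norm_smul, abs_of_pos (Set.mem_Ioi.mp ht)]
    have : ⟪gradient f (x + t • v), v⟫ - ⟪gradient f x, v⟫ ≤ L * t * ‖v‖ ^ 2 :=
      calc ⟪gradient f (x + t • v), v⟫ - ⟪gradient f x, v⟫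
          = ⟪gradient f (x + t • v) - gradient f x, v⟫ := (inner_sub_left _ _ _).symm
        _ ≤ ‖gradient f (x + t • v) - gradient f x‖ * ‖v‖ := real_inner_le_norm _ _
        _ ≤ L * (t * ‖v‖) * ‖v‖ := by
            rw [← hdist]; exact mul_le_mul_of_nonneg_right (hL _ _) (norm_nonneg v)
        _ = L * t * ‖v‖ ^ 2 := by ring
    linarith
  have hanti : AntitoneOn g (Set.Ici 0) :=
    antitoneOn_of_hasDerivWithinAt_nonpos (convex_Ici 0)
      (fun t _ => (hg t).continuousAt.continuousWithinAt) (fun t _ => (hg t).hasDerivWithinAt) hg'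
  have hg10 : g 1 ≤ g 0 :=
    hanti (Set.mem_Ici.mpr le_rfl) (Set.mem_Ici.mpr zero_le_one) zero_le_one
  have hy : x + (1 : ℝ) • v = y := by simp [v]
  simp only [g, hy, zero_smul, add_zero] at hg10
  linarith

end

theorem inner_smul_le_neg_norm_sq_of_inner_sub_smul_nonpos {E : Type*} [NormedAddCommGroup E]
    [InnerProductSpace ℝ E] {α : ℝ} {u d u' : E} (h : ⟪u - α • d - u', u - u'⟫ ≤ 0) :
    α * ⟪d, u' - u⟫ ≤ -‖u' - u‖ ^ 2 := by
  rw [show u - α • d - u' = -(u' - u) - α • d by abel, show u - u' = -(u' - u) by abel,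
    inner_sub_left, inner_neg_neg, real_inner_self_eq_norm_sq, real_inner_smul_left,
    inner_neg_right] at h
  linarith

theorem statement16_general {d : ℕ} (L α : ℝ) (hα : 0 < α) (hαL : α ≤ 1 / (2 * L))
    (U : Set (EuclideanSpace ℝ (Fin d)))
    (Ψ : EuclideanSpace ℝ (Fin d) → ℝ) (hΨdiff : Differentiable ℝ Ψ)
    (hΨLip : ∀ a b, ‖gradient Ψ a - gradient Ψ b‖ ≤ L * ‖a - b‖)
    (uk bk dk uplus : EuclideanSpace ℝ (Fin d))
    (huk : uk ∈ U) (hdk : dk = gradient Ψ uk + bk)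
    (hproj : ∀ w ∈ U, ⟪(uk - α • dk) - uplus, w - uplus⟫ ≤ 0) :
    Ψ uplus - Ψ uk ≤ -(1 / (4 * α)) * ‖uplus - uk‖ ^ 2 + α / 2 * ‖bk‖ ^ 2 := by
  have hdescent := hΨdiff.le_add_inner_gradient_add_norm_sq hΨLip uk uplus
  have hstep := inner_smul_le_neg_norm_sq_of_inner_sub_smul_nonpos (hproj uk huk)
  have hbias : -⟪bk, uplus - uk⟫ ≤ ‖bk‖ * ‖uplus - uk‖ :=
    (neg_le_abs _).trans (abs_real_inner_le_norm _ _)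
  have hstepsize : 2 * α * L ≤ 1 := by
    rcases le_or_gt L 0 with hL | hL
    · nlinarith
    · rw [le_div_iff₀ (by positivity)] at hαL; linarith
  rw [hdk, inner_add_left] at hstep
  -- after scaling by `4α`, Young's inequality is `(‖uplus - uk‖ - α ‖bk‖)² ≥ 0`
  rw [show -(1 / (4 * α)) * ‖uplus - uk‖ ^ 2 + α / 2 * ‖bk‖ ^ 2
      = (-‖uplus - uk‖ ^ 2 + 2 * α ^ 2 * ‖bk‖ ^ 2) / (4 * α) by field_simp; ring,
    le_div_iff₀ (by positivity)]
  nlinarith [mul_le_mul_of_nonneg_left hbias hα.le,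
    mul_le_mul_of_nonneg_right hstepsize (sq_nonneg ‖uplus - uk‖),
    sq_nonneg (‖uplus - uk‖ - α * ‖bk‖)]

/-- A biased projected SGD descent estimate: if `Ψ` has `L`-Lipschitz gradient,
`u⁺ = Proj_U(uk − α dk)` with `U` closed convex (characterized by the variational inequality),
`α ≤ 1/(2L)`, and `dk = ∇Ψ(uk) + bk`, then
`Ψ(u⁺) − Ψ(uk) ≤ −(1/(4α))‖u⁺ − uk‖² + (α/2)‖bk‖²`. -/
theorem statement16 {d : ℕ} (L α : ℝ) (hL : 0 < L) (hα : 0 < α) (hαL : α ≤ 1 / (2 * L))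
    (U : Set (EuclideanSpace ℝ (Fin d)))
    (hUne : U.Nonempty) (hUclosed : IsClosed U) (hUconv : Convex ℝ U)
    (Ψ : EuclideanSpace ℝ (Fin d) → ℝ) (hΨdiff : Differentiable ℝ Ψ)
    (hΨLip : ∀ a b, ‖gradient Ψ a - gradient Ψ b‖ ≤ L * ‖a - b‖)
    (uk bk dk uplus : EuclideanSpace ℝ (Fin d))
    (huk : uk ∈ U) (hdk : dk = gradient Ψ uk + bk)
    (huplus : uplus ∈ U)
    (hproj : ∀ w ∈ U, ⟪(uk - α • dk) - uplus, w - uplus⟫ ≤ 0) :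
    Ψ uplus - Ψ uk ≤ -(1 / (4 * α)) * ‖uplus - uk‖ ^ 2 + α / 2 * ‖bk‖ ^ 2 :=
  statement16_general L α hα hαL U Ψ hΨdiff hΨLip uk bk dk uplus huk hdk hproj
end

section
/- Stationarity measure bound from biased projected gradient step: with u⁺ = Proj_U(u − α(∇Ψ(u) + b)), α ≤ 1/(2L_Ψ), L_Ψ the Lipschitz constant of ∇Ψ, the distance of 0 to ∇Ψ(u⁺) + N_U(u⁺) satisfies dist(0, ∇Ψ(u⁺) + N_U(u⁺))² ≤ 2‖b‖² + (9/(2α²))‖u⁺ − u‖². -/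
open scoped RealInnerProductSpace

/-! The projection inequality says exactly that `ν := α⁻¹ • ((u - α • (∇Ψ u + b)) - u⁺)` is a
normal vector of `U` at `u⁺`, so `∇Ψ u⁺ + ν` is a point of `∇Ψ u⁺ + N_U(u⁺)`. Rewriting it as
`(∇Ψ u⁺ - ∇Ψ u) - b + α⁻¹ • (u - u⁺)` and using `L_Ψ ≤ 1/(2α)` bounds its norm by
`‖b‖ + 3/(2α) ‖u⁺ - u‖`; squaring with `(x + y)² ≤ 2x² + 2y²` gives the claim. -/

section

variable {E : Type*} [NormedAddCommGroup E] [InnerProductSpace ℝ E]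

lemma smul_sub_mem_normal_of_variational {U : Set E} {x p : E} {c : ℝ} (hc : 0 ≤ c)
    (hproj : ∀ w ∈ U, ⟪x - p, w - p⟫ ≤ 0) : ∀ w ∈ U, ⟪c • (x - p), w - p⟫ ≤ 0 := by
  intro w hw
  rw [real_inner_smul_left]
  exact mul_nonpos_of_nonneg_of_nonpos hc (hproj w hw)

lemma add_inv_smul_step_residual_eq (g : E → E) {α : ℝ} (hα : α ≠ 0) (u b p : E) :
    g p + α⁻¹ • ((u - α • (g u + b)) - p) = (g p - g u) - b + α⁻¹ • (u - p) := by
  rw [sub_right_comm, smul_sub, smul_smul, inv_mul_cancel₀ hα, one_smul]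
  abel

lemma norm_add_inv_smul_step_residual_le {g : E → E} {L α : ℝ} (hα : 0 < α)
    (hLα : L ≤ 1 / (2 * α)) (hg : ∀ a b, ‖g a - g b‖ ≤ L * ‖a - b‖) (u b p : E) :
    ‖g p + α⁻¹ • ((u - α • (g u + b)) - p)‖ ≤ ‖b‖ + 3 / (2 * α) * ‖p - u‖ := by
  rw [add_inv_smul_step_residual_eq g hα.ne']
  have hstep : ‖α⁻¹ • (u - p)‖ = 1 / α * ‖p - u‖ := by
    rw [norm_smul, Real.norm_of_nonneg (inv_nonneg.2 hα.le), norm_sub_rev, one_div]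
  have hlip : ‖g p - g u‖ ≤ 1 / (2 * α) * ‖p - u‖ :=
    (hg p u).trans (mul_le_mul_of_nonneg_right hLα (norm_nonneg _))
  have hcoeff : 1 / (2 * α) + 1 / α = 3 / (2 * α) := by field_simp; norm_num
  calc ‖(g p - g u) - b + α⁻¹ • (u - p)‖
      ≤ ‖g p - g u‖ + ‖b‖ + ‖α⁻¹ • (u - p)‖ := by
        simpa only [sub_eq_add_neg (g p - g u), norm_neg] using
          norm_add₃_le (a := g p - g u) (b := -b) (c := α⁻¹ • (u - p))
    _ ≤ ‖b‖ + 3 / (2 * α) * ‖p - u‖ := by rw [hstep, ← hcoeff]; linarith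

end

lemma le_one_div_two_mul_of_le_one_div_two_mul {L α : ℝ} (hα : 0 < α) (h : α ≤ 1 / (2 * L)) :
    L ≤ 1 / (2 * α) := by
  rcases le_or_gt L 0 with hL | hL
  · exact hL.trans (by positivity)
  · rw [le_div_iff₀ (by positivity)] at h ⊢
    linarith

theorem statement17_general {d : ℕ} (LΨ α : ℝ) (hα : 0 < α) (hαL : α ≤ 1 / (2 * LΨ))
    (U : Set (EuclideanSpace ℝ (Fin d)))
    (Ψ : EuclideanSpace ℝ (Fin d) → ℝ)
    (hΨLip : ∀ a b, ‖gradient Ψ a - gradient Ψ b‖ ≤ LΨ * ‖a - b‖)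
    (u b uplus : EuclideanSpace ℝ (Fin d))
    (hproj : ∀ w ∈ U, ⟪(u - α • (gradient Ψ u + b)) - uplus, w - uplus⟫ ≤ 0) :
    (Metric.infDist 0
        {v : EuclideanSpace ℝ (Fin d) | ∃ ν,
          (∀ w ∈ U, ⟪ν, w - uplus⟫ ≤ 0) ∧ v = gradient Ψ uplus + ν}) ^ 2 ≤
      2 * ‖b‖ ^ 2 + 9 / (2 * α ^ 2) * ‖uplus - u‖ ^ 2 := by
  have hnormal := smul_sub_mem_normal_of_variational (inv_nonneg.2 hα.le) hproj
  have hmem : gradient Ψ uplus + α⁻¹ • ((u - α • (gradient Ψ u + b)) - uplus) ∈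
      {v : EuclideanSpace ℝ (Fin d) | ∃ ν,
        (∀ w ∈ U, ⟪ν, w - uplus⟫ ≤ 0) ∧ v = gradient Ψ uplus + ν} := ⟨_, hnormal, rfl⟩
  have hdist := Metric.infDist_le_dist_of_mem (x := 0) hmem
  rw [dist_zero_left] at hdist
  have hbound := hdist.trans <| norm_add_inv_smul_step_residual_le hα
    (le_one_div_two_mul_of_le_one_div_two_mul hα hαL) hΨLip u b uplus
  calc _ ≤ (‖b‖ + 3 / (2 * α) * ‖uplus - u‖) ^ 2 := by gcongr; exact Metric.infDist_nonneg
    _ ≤ 2 * (‖b‖ ^ 2 + (3 / (2 * α) * ‖uplus - u‖) ^ 2) := add_sq_le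
    _ = 2 * ‖b‖ ^ 2 + 9 / (2 * α ^ 2) * ‖uplus - u‖ ^ 2 := by field_simp; ring

/-- Stationarity measure bound from a biased projected gradient step: with
`u⁺ = Proj_U(u − α(∇Ψ(u) + b))` (characterized by the variational inequality),
`α ≤ 1/(2L_Ψ)` and `∇Ψ` `L_Ψ`-Lipschitz, the distance of `0` to `∇Ψ(u⁺) + N_U(u⁺)` satisfies
`dist(0, ∇Ψ(u⁺) + N_U(u⁺))² ≤ 2‖b‖² + (9/(2α²))‖u⁺ − u‖²`. -/
theorem statement17 {d : ℕ} (LΨ α : ℝ) (hL : 0 < LΨ) (hα : 0 < α) (hαL : α ≤ 1 / (2 * LΨ))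
    (U : Set (EuclideanSpace ℝ (Fin d)))
    (hUne : U.Nonempty) (hUclosed : IsClosed U) (hUconv : Convex ℝ U)
    (Ψ : EuclideanSpace ℝ (Fin d) → ℝ) (hΨdiff : Differentiable ℝ Ψ)
    (hΨLip : ∀ a b, ‖gradient Ψ a - gradient Ψ b‖ ≤ LΨ * ‖a - b‖)
    (u b uplus : EuclideanSpace ℝ (Fin d)) (hu : u ∈ U) (huplus : uplus ∈ U)
    (hproj : ∀ w ∈ U, ⟪(u - α • (gradient Ψ u + b)) - uplus, w - uplus⟫ ≤ 0) :
    (Metric.infDist 0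
        {v : EuclideanSpace ℝ (Fin d) | ∃ ν,
          (∀ w ∈ U, ⟪ν, w - uplus⟫ ≤ 0) ∧ v = gradient Ψ uplus + ν}) ^ 2 ≤
      2 * ‖b‖ ^ 2 + 9 / (2 * α ^ 2) * ‖uplus - u‖ ^ 2 :=
  statement17_general LΨ α hα hαL U Ψ hΨLip u b uplus hproj
end
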